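/- Under the hypotheses of the preceding compressed-trajectory setting (U_l, V_l orthogonal with V_{l+1} = U_l, U_lᵀ·W_l(t)·V_l = diag(W̃_l(t), ρ_l(t)·I_m) with W̃_l(0) = ε_l·I_{2r}, and compressed iterates Ŵ_l(t) defined by Ŵ_l(0) := ε_l·I_{2r} and Ŵ_l(t+1) := (1 − ηλ)·Ŵ_l(t) − η·Ŵ_{L:l+1}(t)ᵀ·(Ŵ_{L:1}(t) − U_{L,1}ᵀ·Φ·V_{1,1})·Ŵ_{l−1:1}(t)ᵀ), for every t ≥ 0 one has the exact identity ‖W_{L:1}(t) − U_{L,1}·Ŵ_{L:1}(t)·V_{1,1}ᵀ‖_F² = m·∏_{l=1}^L ρ_l(t)², where ‖·‖_F denotes the Frobenius norm and U_{L,1}, V_{1,1} are the first 2r columns of U_L, V_1. -/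

import Mathlib

open Matrix BigOperators Filter

noncomputable section

/-- Auxiliary: product of `k` consecutive matrices ending (on the right) at index `i`. -/
def chainAux {n : Type*} [Fintype n] [DecidableEq n]
    (W : ℕ → Matrix n n ℝ) (i : ℕ) : ℕ → Matrix n n ℝ
  | 0 => 1
  | (k+1) => W (i + k) * chainAux W i k

/-- `chain W i j = W j * W (j-1) * ⋯ * W i`; equals `1` when `j < i` (empty product). -/
def chain {n : Type*} [Fintype n] [DecidableEq n]
    (W : ℕ → Matrix n n ℝ) (i j : ℕ) : Matrix n n ℝ :=
  chainAux W i (j + 1 - i)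

/-- `blockDiag r m A B` is the `(2r+m)×(2r+m)` block-diagonal matrix `diag(A, B)`
with top-left block `A` (of size `2r×2r`) and bottom-right block `B` (of size `m×m`). -/
def blockDiag (r m : ℕ) (A : Matrix (Fin (2*r)) (Fin (2*r)) ℝ)
    (B : Matrix (Fin m) (Fin m) ℝ) : Matrix (Fin (2*r + m)) (Fin (2*r + m)) ℝ :=
  Matrix.reindex finSumFinEquiv finSumFinEquiv (Matrix.fromBlocks A 0 0 B)

/-- The `d×2r` matrix formed by the first `2r` columns of a `(2r+m)×(2r+m)` matrix. -/
def cols1 (r m : ℕ) (U : Matrix (Fin (2*r + m)) (Fin (2*r + m)) ℝ) :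
    Matrix (Fin (2*r + m)) (Fin (2*r)) ℝ :=
  fun i j => U i (Fin.castAdd m j)

/-- The `d×m` matrix formed by the last `m` columns of a `(2r+m)×(2r+m)` matrix. -/
def cols2 (r m : ℕ) (U : Matrix (Fin (2*r + m)) (Fin (2*r + m)) ℝ) :
    Matrix (Fin (2*r + m)) (Fin m) ℝ :=
  fun i j => U i (Fin.natAdd (2*r) j)

/-- Squared Frobenius norm: `‖A‖_F² = trace(AᵀA)`. -/
def frobSq {p q : Type*} [Fintype p] [Fintype q] (A : Matrix p q ℝ) : ℝ :=
  Matrix.trace (Aᵀ * A)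

/-- Frobenius norm: `‖A‖_F = √(trace(AᵀA))`. -/
def frobNorm {p q : Type*} [Fintype p] [Fintype q] (A : Matrix p q ℝ) : ℝ :=
  Real.sqrt (Matrix.trace (Aᵀ * A))

/-!
With the frame convention `U₀ := V₁`, each layer is `W_k = U_k · diag(W̃_k, ρ_k I) · U_{k-1}ᵀ`, so
the orthogonal frames telescope in every partial product:
`W_{j:i+1} = U_j · diag(W̃_{j:i+1}, ∏ ρ_k · I) · U_iᵀ`. Conjugating the gradient step by the frames
and reading off the top-left `2r × 2r` block shows that the `W̃_l` obey the compressed recursion,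
so `W̃ = Ŵ` by induction on `t`. The error is then `U_L · diag(0, ∏ ρ_l · I_m) · V₁ᵀ`, whose
squared Frobenius norm is `m · ∏ ρ_l²`.
-/

section Chain

variable {n : Type*} [Fintype n] [DecidableEq n]

theorem chain_of_lt (W : ℕ → Matrix n n ℝ) {i j : ℕ} (h : j < i) : chain W i j = 1 := by
  rw [chain, Nat.sub_eq_zero_of_le h, chainAux]

theorem chain_succ (W : ℕ → Matrix n n ℝ) {i j : ℕ} (h : i ≤ j + 1) :
    chain W i (j + 1) = W (j + 1) * chain W i j := by
  rw [chain, chain, show j + 1 + 1 - i = j + 1 - i + 1 by omega, chainAux,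
    show i + (j + 1 - i) = j + 1 by omega]

theorem chain_congr {W W' : ℕ → Matrix n n ℝ} {i j : ℕ}
    (h : ∀ k, i ≤ k → k ≤ j → W k = W' k) : chain W i j = chain W' i j := by
  suffices ∀ N ≤ j + 1 - i, chainAux W i N = chainAux W' i N from this _ le_rfl
  intro N hN
  induction N with
  | zero => rfl
  | succ N ih => rw [chainAux, chainAux, ih (by omega), h _ (by omega) (by omega)]

theorem chain_smul_one (c : ℕ → ℝ) (i j : ℕ) :
    chain (fun k => c k • (1 : Matrix n n ℝ)) i j = (∏ k ∈ Finset.Icc i j, c k) • 1 := by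
  rw [chain, ← Finset.Ico_add_one_right_eq_Icc, Finset.prod_Ico_eq_prod_range]
  induction j + 1 - i with
  | zero => simp [chainAux]
  | succ N ih => simp [chainAux, ih, Finset.prod_range_succ, smul_smul, mul_comm]

theorem chain_eq_mul_chain_mul_transpose {W D P : ℕ → Matrix n n ℝ} {i j : ℕ} (hij : i ≤ j)
    (hP : ∀ k, i ≤ k → k ≤ j → (P k)ᵀ * P k = 1)
    (hW : ∀ k, i < k → k ≤ j → W k = P k * D k * (P (k - 1))ᵀ) :
    chain W (i + 1) j = P j * chain D (i + 1) j * (P i)ᵀ := by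
  induction j, hij using Nat.le_induction with
  | base =>
    rw [chain_of_lt _ (by omega), chain_of_lt _ (by omega), Matrix.mul_one,
      mul_eq_one_comm.mp (hP i le_rfl le_rfl)]
  | succ j hij ih =>
    rw [chain_succ _ (by omega), chain_succ _ (by omega), hW (j + 1) (by omega) le_rfl,
      Nat.add_sub_cancel, ih (fun k h1 h2 => hP k h1 (by omega)) (fun k h1 h2 => hW k h1 (by omega))]
    simp only [Matrix.mul_assoc]
    rw [← Matrix.mul_assoc (P j)ᵀ, hP j hij (by omega), Matrix.one_mul]

end Chain

section BlockDiag

variable {r m : ℕ}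

theorem blockDiag_eq_reindexAlgEquiv (A : Matrix (Fin (2*r)) (Fin (2*r)) ℝ)
    (B : Matrix (Fin m) (Fin m) ℝ) :
    blockDiag r m A B = reindexAlgEquiv ℝ ℝ finSumFinEquiv (fromBlocks A 0 0 B) := by
  rfl

theorem blockDiag_one_one :
    blockDiag r m 1 1 = (1 : Matrix (Fin (2*r + m)) (Fin (2*r + m)) ℝ) := by
  rw [blockDiag_eq_reindexAlgEquiv, fromBlocks_one, map_one]

theorem blockDiag_mul_blockDiag (A C : Matrix (Fin (2*r)) (Fin (2*r)) ℝ)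
    (B D : Matrix (Fin m) (Fin m) ℝ) :
    blockDiag r m A B * blockDiag r m C D = blockDiag r m (A * C) (B * D) := by
  simp only [blockDiag_eq_reindexAlgEquiv, ← map_mul, fromBlocks_multiply]
  simp

theorem blockDiag_sub_blockDiag (A C : Matrix (Fin (2*r)) (Fin (2*r)) ℝ)
    (B D : Matrix (Fin m) (Fin m) ℝ) :
    blockDiag r m A B - blockDiag r m C D = blockDiag r m (A - C) (B - D) := by
  simp only [blockDiag_eq_reindexAlgEquiv, ← map_sub]
  congr 1
  ext (i | i) (j | j) <;> simp

theorem smul_blockDiag (c : ℝ) (A : Matrix (Fin (2*r)) (Fin (2*r)) ℝ)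
    (B : Matrix (Fin m) (Fin m) ℝ) :
    c • blockDiag r m A B = blockDiag r m (c • A) (c • B) := by
  simp only [blockDiag_eq_reindexAlgEquiv, ← map_smul, fromBlocks_smul, smul_zero]

theorem transpose_blockDiag (A : Matrix (Fin (2*r)) (Fin (2*r)) ℝ)
    (B : Matrix (Fin m) (Fin m) ℝ) :
    (blockDiag r m A B)ᵀ = blockDiag r m Aᵀ Bᵀ := by
  simp [_root_.blockDiag, fromBlocks_transpose]

theorem chain_blockDiag (A : ℕ → Matrix (Fin (2*r)) (Fin (2*r)) ℝ)
    (B : ℕ → Matrix (Fin m) (Fin m) ℝ) (i j : ℕ) :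
    chain (fun k => blockDiag r m (A k) (B k)) i j = blockDiag r m (chain A i j) (chain B i j) := by
  unfold chain
  induction j + 1 - i with
  | zero => exact blockDiag_one_one.symm
  | succ N ih => rw [chainAux, chainAux, chainAux, ih, blockDiag_mul_blockDiag]

theorem trace_blockDiag (A : Matrix (Fin (2*r)) (Fin (2*r)) ℝ) (B : Matrix (Fin m) (Fin m) ℝ) :
    trace (blockDiag r m A B) = trace A + trace B := by
  simp [trace, _root_.blockDiag, Fin.sum_univ_add]

theorem cols1_mul_mul_transpose_cols1 (X Y : Matrix (Fin (2*r + m)) (Fin (2*r + m)) ℝ)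
    (A : Matrix (Fin (2*r)) (Fin (2*r)) ℝ) :
    cols1 r m X * A * (cols1 r m Y)ᵀ = X * blockDiag r m A 0 * Yᵀ := by
  ext i j
  simp [mul_apply, cols1, _root_.blockDiag, Fin.sum_univ_add, Finset.sum_mul]

def topLeft (M : Matrix (Fin (2*r + m)) (Fin (2*r + m)) ℝ) : Matrix (Fin (2*r)) (Fin (2*r)) ℝ :=
  (reindex finSumFinEquiv.symm finSumFinEquiv.symm M).toBlocks₁₁

theorem topLeft_sub (M N : Matrix (Fin (2*r + m)) (Fin (2*r + m)) ℝ) :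
    topLeft (M - N) = topLeft M - topLeft N := rfl

theorem topLeft_smul (c : ℝ) (M : Matrix (Fin (2*r + m)) (Fin (2*r + m)) ℝ) :
    topLeft (c • M) = c • topLeft M := rfl

theorem topLeft_blockDiag (A : Matrix (Fin (2*r)) (Fin (2*r)) ℝ) (B : Matrix (Fin m) (Fin m) ℝ) :
    topLeft (blockDiag r m A B) = A := by
  simp [topLeft, _root_.blockDiag]

theorem topLeft_blockDiag_mul_mul_blockDiag (A C : Matrix (Fin (2*r)) (Fin (2*r)) ℝ)
    (B D : Matrix (Fin m) (Fin m) ℝ) (M : Matrix (Fin (2*r + m)) (Fin (2*r + m)) ℝ) :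
    topLeft (blockDiag r m A B * M * blockDiag r m C D) = A * topLeft M * C := by
  obtain ⟨N, rfl⟩ := (reindexAlgEquiv ℝ ℝ finSumFinEquiv).surjective M
  rw [blockDiag_eq_reindexAlgEquiv, blockDiag_eq_reindexAlgEquiv, ← map_mul, ← map_mul,
    ← fromBlocks_toBlocks N, fromBlocks_multiply, fromBlocks_multiply]
  simp [topLeft]

theorem topLeft_transpose_mul_mul (X Y M : Matrix (Fin (2*r + m)) (Fin (2*r + m)) ℝ) :
    topLeft (Xᵀ * M * Y) = (cols1 r m X)ᵀ * M * cols1 r m Y := by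
  ext a b
  simp [topLeft, toBlocks₁₁, cols1, mul_apply]

end BlockDiag

theorem frobSq_mul_mul_transpose {p p' q q' : Type*} [Fintype p] [Fintype p'] [Fintype q]
    [Fintype q'] [DecidableEq p'] [DecidableEq q'] {U : Matrix p p' ℝ} {V : Matrix q q' ℝ}
    (hU : Uᵀ * U = 1) (hV : Vᵀ * V = 1) (M : Matrix p' q' ℝ) :
    frobSq (U * M * Vᵀ) = frobSq M := by
  simp only [frobSq, transpose_mul, transpose_transpose, Matrix.mul_assoc]
  rw [← Matrix.mul_assoc Uᵀ, hU, Matrix.one_mul, trace_mul_comm, Matrix.mul_assoc,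
    Matrix.mul_assoc, hV, Matrix.mul_one]

theorem frobSq_blockDiag {r m : ℕ} (A : Matrix (Fin (2*r)) (Fin (2*r)) ℝ)
    (B : Matrix (Fin m) (Fin m) ℝ) : frobSq (blockDiag r m A B) = frobSq A + frobSq B := by
  rw [frobSq, transpose_blockDiag, blockDiag_mul_blockDiag, trace_blockDiag, frobSq, frobSq]

theorem frobSq_smul_one {n : Type*} [Fintype n] [DecidableEq n] (c : ℝ) :
    frobSq (c • (1 : Matrix n n ℝ)) = Fintype.card n * c ^ 2 := by
  rw [frobSq, transpose_smul, transpose_one, smul_mul_smul_comm, Matrix.one_mul, trace_smul,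
    trace_one, smul_eq_mul]
  ring

theorem transpose_mul_sub_mul_transpose {n : Type*} [Fintype n] [DecidableEq n]
    {PL P₀ : Matrix n n ℝ} (hL : PLᵀ * PL = 1) (h₀ : P₀ᵀ * P₀ = 1) (Pa Pb A B C Φ : Matrix n n ℝ) :
    (PL * A * Paᵀ)ᵀ * (PL * B * P₀ᵀ - Φ) * (Pb * C * P₀ᵀ)ᵀ
      = Pa * (Aᵀ * (B - PLᵀ * Φ * P₀) * Cᵀ) * Pbᵀ := by
  simp only [transpose_mul, transpose_transpose, Matrix.mul_sub, Matrix.sub_mul, Matrix.mul_assoc]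
  rw [← Matrix.mul_assoc PLᵀ PL, hL, Matrix.one_mul, ← Matrix.mul_assoc P₀ᵀ P₀, h₀,
    Matrix.one_mul]

theorem eq_of_mul_mul_transpose_eq {n : Type*} [Fintype n] [DecidableEq n] {P Q X Y : Matrix n n ℝ}
    (hP : Pᵀ * P = 1) (hQ : Qᵀ * Q = 1) (h : P * X * Qᵀ = P * Y * Qᵀ) : X = Y := by
  have cancel : ∀ Z, Pᵀ * (P * Z * Qᵀ) * Q = Z := fun Z => by
    rw [← Matrix.mul_assoc, ← Matrix.mul_assoc, hP, Matrix.one_mul, Matrix.mul_assoc, hQ,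
      Matrix.mul_one]
  rw [← cancel X, h, cancel]

section CompressedTrajectory

variable {r m L : ℕ} {W : ℕ → ℕ → Matrix (Fin (2*r + m)) (Fin (2*r + m)) ℝ}
  {P : ℕ → Matrix (Fin (2*r + m)) (Fin (2*r + m)) ℝ}
  {Wtil : ℕ → ℕ → Matrix (Fin (2*r)) (Fin (2*r)) ℝ} {ρ : ℕ → ℕ → ℝ}

theorem chain_eq_frame_blockDiag (hP : ∀ k ≤ L, (P k)ᵀ * P k = 1)
    (hW : ∀ t k, 1 ≤ k → k ≤ L →
      W t k = P k * blockDiag r m (Wtil t k) (ρ t k • 1) * (P (k - 1))ᵀ)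
    (t : ℕ) {i j : ℕ} (hij : i ≤ j) (hj : j ≤ L) :
    chain (W t) (i + 1) j
      = P j * blockDiag r m (chain (Wtil t) (i + 1) j) ((∏ k ∈ Finset.Icc (i + 1) j, ρ t k) • 1)
        * (P i)ᵀ := by
  rw [chain_eq_mul_chain_mul_transpose (D := fun k => blockDiag r m (Wtil t k) (ρ t k • 1)) hij
    (fun k _ hk => hP k (by omega)) (fun k hk hk' => hW t k (by omega) (by omega)),
    chain_blockDiag, chain_smul_one]

theorem topLeftBlock_succ {η lam : ℝ} {Φ : Matrix (Fin (2*r + m)) (Fin (2*r + m)) ℝ}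
    (hP : ∀ k ≤ L, (P k)ᵀ * P k = 1)
    (hW : ∀ t k, 1 ≤ k → k ≤ L →
      W t k = P k * blockDiag r m (Wtil t k) (ρ t k • 1) * (P (k - 1))ᵀ)
    (hWupd : ∀ t l, 1 ≤ l → l ≤ L →
      W (t+1) l = (1 - η * lam) • W t l
        - η • ((chain (W t) (l+1) L)ᵀ * (chain (W t) 1 L - Φ) * (chain (W t) 1 (l-1))ᵀ))
    (t : ℕ) {l : ℕ} (hl : 1 ≤ l) (hlL : l ≤ L) :
    Wtil (t+1) l = (1 - η * lam) • Wtil t l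
      - η • ((chain (Wtil t) (l+1) L)ᵀ
          * (chain (Wtil t) 1 L - (cols1 r m (P L))ᵀ * Φ * cols1 r m (P 0))
          * (chain (Wtil t) 1 (l-1))ᵀ) := by
  have hchain {i j : ℕ} (hij : i ≤ j) (hj : j ≤ L) := chain_eq_frame_blockDiag hP hW t hij hj
  have hchain₁ {j : ℕ} (hj : j ≤ L) := hchain (i := 0) (Nat.zero_le j) hj
  rw [zero_add] at hchain₁
  have hblock : blockDiag r m (Wtil (t+1) l) (ρ (t+1) l • 1)
      = (1 - η * lam) • blockDiag r m (Wtil t l) (ρ t l • 1)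
        - η • ((blockDiag r m (chain (Wtil t) (l+1) L)
              ((∏ k ∈ Finset.Icc (l + 1) L, ρ t k) • 1))ᵀ
            * (blockDiag r m (chain (Wtil t) 1 L) ((∏ k ∈ Finset.Icc 1 L, ρ t k) • 1)
              - (P L)ᵀ * Φ * P 0)
            * (blockDiag r m (chain (Wtil t) 1 (l-1))
              ((∏ k ∈ Finset.Icc 1 (l - 1), ρ t k) • 1))ᵀ) := by
    refine eq_of_mul_mul_transpose_eq (hP l hlL) (hP (l - 1) (by omega)) ?_
    rw [← hW (t+1) l hl hlL, hWupd t l hl hlL, hW t l hl hlL, hchain hlL le_rfl,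
      hchain₁ (j := L) le_rfl, hchain₁ (j := l - 1) (by omega),
      transpose_mul_sub_mul_transpose (hP L le_rfl) (hP 0 (by omega))]
    simp only [Matrix.mul_sub, Matrix.sub_mul, Matrix.mul_smul, Matrix.smul_mul]
  have := congrArg topLeft hblock
  simpa only [topLeft_sub, topLeft_smul, topLeft_blockDiag, topLeft_blockDiag_mul_mul_blockDiag,
    topLeft_transpose_mul_mul, transpose_blockDiag] using this

theorem topLeftBlock_eq_compressed {η lam : ℝ} {Φ : Matrix (Fin (2*r + m)) (Fin (2*r + m)) ℝ}
    {What : ℕ → ℕ → Matrix (Fin (2*r)) (Fin (2*r)) ℝ}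
    (hP : ∀ k ≤ L, (P k)ᵀ * P k = 1)
    (hW : ∀ t k, 1 ≤ k → k ≤ L →
      W t k = P k * blockDiag r m (Wtil t k) (ρ t k • 1) * (P (k - 1))ᵀ)
    (hWupd : ∀ t l, 1 ≤ l → l ≤ L →
      W (t+1) l = (1 - η * lam) • W t l
        - η • ((chain (W t) (l+1) L)ᵀ * (chain (W t) 1 L - Φ) * (chain (W t) 1 (l-1))ᵀ))
    (h₀ : ∀ l, 1 ≤ l → l ≤ L → Wtil 0 l = What 0 l)
    (hWhatupd : ∀ t l, 1 ≤ l → l ≤ L →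
      What (t+1) l = (1 - η * lam) • What t l
        - η • ((chain (What t) (l+1) L)ᵀ
            * (chain (What t) 1 L - (cols1 r m (P L))ᵀ * Φ * cols1 r m (P 0))
            * (chain (What t) 1 (l-1))ᵀ))
    (t : ℕ) {l : ℕ} (hl : 1 ≤ l) (hlL : l ≤ L) : Wtil t l = What t l := by
  induction t generalizing l with
  | zero => exact h₀ l hl hlL
  | succ t ih =>
    rw [topLeftBlock_succ hP hW hWupd t hl hlL, hWhatupd t l hl hlL, ih hl hlL,
      chain_congr fun k hk hk' => ih (by omega) hk',
      chain_congr fun k hk hk' => ih hk (by omega),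
      chain_congr fun k hk hk' => ih hk (by omega)]

theorem frobSq_chain_sub_compressed (hP : ∀ k ≤ L, (P k)ᵀ * P k = 1)
    (hW : ∀ t k, 1 ≤ k → k ≤ L →
      W t k = P k * blockDiag r m (Wtil t k) (ρ t k • 1) * (P (k - 1))ᵀ) (t : ℕ) :
    frobSq (chain (W t) 1 L - cols1 r m (P L) * chain (Wtil t) 1 L * (cols1 r m (P 0))ᵀ)
      = m * ∏ l ∈ Finset.Icc 1 L, (ρ t l) ^ 2 := by
  rw [chain_eq_frame_blockDiag hP hW t (Nat.zero_le L) le_rfl, cols1_mul_mul_transpose_cols1,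
    ← Matrix.sub_mul, ← Matrix.mul_sub, blockDiag_sub_blockDiag, sub_self, sub_zero,
    frobSq_mul_mul_transpose (hP L le_rfl) (hP 0 (Nat.zero_le L)), frobSq_blockDiag,
    frobSq_smul_one, Fintype.card_fin, Finset.prod_pow]
  simp [frobSq]

end CompressedTrajectory

theorem statement12_general
    (r m : ℕ) (L : ℕ) (hL : 1 ≤ L)
    (Φ : Matrix (Fin (2*r + m)) (Fin (2*r + m)) ℝ)
    (ε : ℕ → ℝ)
    (η lam : ℝ)
    (W : ℕ → ℕ → Matrix (Fin (2*r + m)) (Fin (2*r + m)) ℝ)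
    (hWupd : ∀ t l, 1 ≤ l → l ≤ L →
      W (t+1) l = (1 - η * lam) • W t l
        - η • ((chain (W t) (l+1) L)ᵀ * (chain (W t) 1 L - Φ) * (chain (W t) 1 (l-1))ᵀ))
    (ρ : ℕ → ℕ → ℝ)
    -- the block-diagonal decomposition hypothesis
    (U V : ℕ → Matrix (Fin (2*r + m)) (Fin (2*r + m)) ℝ)
    (hU : ∀ l, 1 ≤ l → l ≤ L → ((U l)ᵀ * U l = 1 ∧ U l * (U l)ᵀ = 1))
    (hV : ∀ l, 1 ≤ l → l ≤ L → ((V l)ᵀ * V l = 1 ∧ V l * (V l)ᵀ = 1))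
    (hUV : ∀ l, 1 ≤ l → l + 1 ≤ L → V (l+1) = U l)
    (Wtil : ℕ → ℕ → Matrix (Fin (2*r)) (Fin (2*r)) ℝ)
    (hdecomp : ∀ t l, 1 ≤ l → l ≤ L →
      (U l)ᵀ * W t l * V l = blockDiag r m (Wtil t l) (ρ t l • 1))
    (hWtil0 : ∀ l, 1 ≤ l → l ≤ L → Wtil 0 l = ε l • 1)
    -- the compressed iterates
    (What : ℕ → ℕ → Matrix (Fin (2*r)) (Fin (2*r)) ℝ)
    (hWhat0 : ∀ l, 1 ≤ l → l ≤ L → What 0 l = ε l • 1)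
    (hWhatupd : ∀ t l, 1 ≤ l → l ≤ L →
      What (t+1) l = (1 - η * lam) • What t l
        - η • ((chain (What t) (l+1) L)ᵀ
            * (chain (What t) 1 L - (cols1 r m (U L))ᵀ * Φ * cols1 r m (V 1))
            * (chain (What t) 1 (l-1))ᵀ)) :
    ∀ t : ℕ,
      frobSq (chain (W t) 1 L - cols1 r m (U L) * chain (What t) 1 L * (cols1 r m (V 1))ᵀ)
        = (m : ℝ) * ∏ l ∈ Finset.Icc 1 L, (ρ t l)^2 := by
  set P := Function.update U 0 (V 1)
  have hP₀ : P 0 = V 1 := Function.update_self ..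
  have hP_succ (k : ℕ) : P (k + 1) = U (k + 1) := Function.update_of_ne k.succ_ne_zero ..
  have hPL : P L = U L := by obtain ⟨k, rfl⟩ := Nat.exists_eq_add_of_le' hL; exact hP_succ k
  have hP : ∀ k ≤ L, (P k)ᵀ * P k = 1
    | 0, _ => hP₀ ▸ (hV 1 le_rfl hL).1
    | k + 1, hk => hP_succ k ▸ (hU (k + 1) (by omega) hk).1
  have hV_eq : ∀ k, 1 ≤ k → k ≤ L → V k = P (k - 1)
    | 1, _, _ => hP₀.symm
    | k + 2, _, hk => by rw [hUV (k + 1) (by omega) hk, Nat.add_succ_sub_one, hP_succ]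
  have hW : ∀ t k, 1 ≤ k → k ≤ L →
      W t k = P k * blockDiag r m (Wtil t k) (ρ t k • 1) * (P (k - 1))ᵀ := by
    intro t k hk hkL
    obtain ⟨j, rfl⟩ := Nat.exists_eq_add_of_le' hk
    rw [hP_succ, ← hV_eq _ hk hkL, ← hdecomp t _ hk hkL, ← Matrix.mul_assoc, ← Matrix.mul_assoc,
      (hU _ hk hkL).2, Matrix.one_mul, Matrix.mul_assoc, (hV _ hk hkL).2, Matrix.mul_one]
  rw [← hPL, ← hP₀] at hWhatupd ⊢
  intro t
  rw [← chain_congr fun k hk hk' => topLeftBlock_eq_compressed hP hW hWupd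
    (fun l hl hlL => (hWtil0 l hl hlL).trans (hWhat0 l hl hlL).symm) hWhatupd t hk hk']
  exact frobSq_chain_sub_compressed hP hW t

/-- exact identity for the compression error:
`‖W_{L:1}(t) − U_{L,1}·Ŵ_{L:1}(t)·V_{1,1}ᵀ‖_F² = m·∏_{l=1}^L ρ_l(t)²`. -/
theorem statement12
    (r m : ℕ) (hm : 0 < m) (L : ℕ) (hL : 1 ≤ L)
    (Φ : Matrix (Fin (2*r + m)) (Fin (2*r + m)) ℝ) (hΦ : Φ.rank ≤ r)
    (ε : ℕ → ℝ) (hε : ∀ l, 1 ≤ l → l ≤ L → 0 < ε l)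
    (η lam : ℝ) (hη : 0 < η) (hlam : 0 ≤ lam)
    (W : ℕ → ℕ → Matrix (Fin (2*r + m)) (Fin (2*r + m)) ℝ)
    (hW0 : ∀ l, 1 ≤ l → l ≤ L →
      W 0 l * (W 0 l)ᵀ = (ε l)^2 • (1 : Matrix (Fin (2*r + m)) (Fin (2*r + m)) ℝ) ∧
      (W 0 l)ᵀ * W 0 l = (ε l)^2 • (1 : Matrix (Fin (2*r + m)) (Fin (2*r + m)) ℝ))
    (hWupd : ∀ t l, 1 ≤ l → l ≤ L →
      W (t+1) l = (1 - η * lam) • W t l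
        - η • ((chain (W t) (l+1) L)ᵀ * (chain (W t) 1 L - Φ) * (chain (W t) 1 (l-1))ᵀ))
    (ρ : ℕ → ℕ → ℝ)
    (hρ0 : ∀ l, ρ 0 l = ε l)
    (hρ : ∀ t l, ρ (t+1) l
      = ρ t l * (1 - η * lam - η * ∏ k ∈ (Finset.Icc 1 L).erase l, (ρ t k)^2))
    -- the block-diagonal decomposition hypothesis
    (U V : ℕ → Matrix (Fin (2*r + m)) (Fin (2*r + m)) ℝ)
    (hU : ∀ l, 1 ≤ l → l ≤ L → ((U l)ᵀ * U l = 1 ∧ U l * (U l)ᵀ = 1))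
    (hV : ∀ l, 1 ≤ l → l ≤ L → ((V l)ᵀ * V l = 1 ∧ V l * (V l)ᵀ = 1))
    (hUV : ∀ l, 1 ≤ l → l + 1 ≤ L → V (l+1) = U l)
    (Wtil : ℕ → ℕ → Matrix (Fin (2*r)) (Fin (2*r)) ℝ)
    (hdecomp : ∀ t l, 1 ≤ l → l ≤ L →
      (U l)ᵀ * W t l * V l = blockDiag r m (Wtil t l) (ρ t l • 1))
    (hWtil0 : ∀ l, 1 ≤ l → l ≤ L → Wtil 0 l = ε l • 1)
    -- the compressed iterates
    (What : ℕ → ℕ → Matrix (Fin (2*r)) (Fin (2*r)) ℝ)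
    (hWhat0 : ∀ l, 1 ≤ l → l ≤ L → What 0 l = ε l • 1)
    (hWhatupd : ∀ t l, 1 ≤ l → l ≤ L →
      What (t+1) l = (1 - η * lam) • What t l
        - η • ((chain (What t) (l+1) L)ᵀ
            * (chain (What t) 1 L - (cols1 r m (U L))ᵀ * Φ * cols1 r m (V 1))
            * (chain (What t) 1 (l-1))ᵀ)) :
    ∀ t : ℕ,
      frobSq (chain (W t) 1 L - cols1 r m (U L) * chain (What t) 1 L * (cols1 r m (V 1))ᵀ)
        = (m : ℝ) * ∏ l ∈ Finset.Icc 1 L, (ρ t l)^2 :=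
  statement12_general r m L hL Φ ε η lam W hWupd ρ U V hU hV hUV Wtil hdecomp hWtil0 What hWhat0
    hWhatupd
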